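/- arXiv:2102.02396 — 2 statements merged into one kernel-verified Lean document; each statement's English description precedes it below -/
import Mathlib

section
/- Let (a_n) be a sequence of nonnegative reals satisfying a_{n+1} ≤ ρ a_n + q a_n² for all n, where 0 ≤ ρ < 1 and q ≥ 0. If a_0 < ρ(1-ρ)/q (with q > 0), then for all n, a_n ≤ a_0 K ρⁿ where K = (1 - a_0 q / (ρ(1-ρ)))⁻¹. -/
theorem stmt_0 (a : ℕ → ℝ) (ρ q : ℝ)
    (ha : ∀ n, 0 ≤ a n) (hρ0 : 0 ≤ ρ) (hρ1 : ρ < 1) (hq : 0 < q)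
    (hrec : ∀ n, a (n + 1) ≤ ρ * a n + q * (a n) ^ 2)
    (h0 : a 0 < ρ * (1 - ρ) / q) :
    ∀ n, a n ≤ a 0 * (1 - a 0 * q / (ρ * (1 - ρ)))⁻¹ * ρ ^ n := by
  have hρpos : 0 < ρ := by
    rcases hρ0.lt_or_eq with h | h
    · exact h
    · exfalso
      have h0' := ha 0
      rw [← h] at h0
      simp at h0
      linarith
  have h1ρ : 0 < 1 - ρ := by linarith
  set ε : ℝ := a 0 * q / (ρ * (1 - ρ)) with hεdef
  have hεnum : a 0 * q < ρ * (1 - ρ) := (lt_div_iff₀ hq).mp h0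
  have hε1 : ε < 1 := by
    rw [hεdef, div_lt_one (by positivity)]; exact hεnum
  have hε0 : 0 ≤ ε := by
    have := ha 0
    positivity
  have hεq : ε * (ρ * (1 - ρ)) = a 0 * q := by
    rw [hεdef]; field_simp
  have key : ∀ n, a n * (1 - ε * (1 - ρ ^ n)) ≤ a 0 * ρ ^ n := by
    intro n
    induction n with
    | zero => simp
    | succ n ih =>
      have han := ha n
      have hρn0 : (0:ℝ) ≤ ρ ^ n := pow_nonneg hρ0 n
      have hρn1 : ρ ^ n ≤ 1 := pow_le_one₀ hρ0 hρ1.le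
      have hpow : ρ ^ (n+1) = ρ ^ n * ρ := pow_succ ρ n
      -- D' ≤ D
      have hDle : a n * (1 - ε * (1 - ρ ^ (n+1))) ≤ a n * (1 - ε * (1 - ρ ^ n)) := by
        apply mul_le_mul_of_nonneg_left _ han
        have : ρ ^ (n+1) ≤ ρ ^ n := by
          rw [hpow]; nlinarith
        nlinarith
      have h2 : a n * (1 - ε * (1 - ρ ^ (n+1))) ≤ a 0 * ρ ^ n := hDle.trans ih
      have h3 : a n * (a n * (1 - ε * (1 - ρ ^ (n+1)))) ≤ a n * (a 0 * ρ ^ n) :=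
        mul_le_mul_of_nonneg_left h2 han
      have h4 : ρ * (a n * (ε * (ρ ^ n * (1 - ρ)))) = q * (a n * (a 0 * ρ ^ n)) := by
        linear_combination (a n * ρ ^ n) * hεq
      have hD' : 0 ≤ 1 - ε * (1 - ρ ^ (n+1)) := by
        have hρn1' : ρ ^ (n+1) ≤ 1 := pow_le_one₀ hρ0 hρ1.le
        have hρn0' : (0:ℝ) ≤ ρ ^ (n+1) := pow_nonneg hρ0 (n+1)
        nlinarith
      have hrecn := hrec n
      have h5 : a (n+1) * (1 - ε * (1 - ρ ^ (n+1))) ≤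
          (ρ * a n + q * (a n) ^ 2) * (1 - ε * (1 - ρ ^ (n+1))) :=
        mul_le_mul_of_nonneg_right hrecn hD'
      refine h5.trans ?_
      have hA : ρ * (a n * (1 - ε * (1 - ρ ^ n))) ≤ ρ * (a 0 * ρ ^ n) :=
        mul_le_mul_of_nonneg_left ih hρ0
      have hB : q * (a n * (a n * (1 - ε * (1 - ρ ^ (n+1))))) ≤ q * (a n * (a 0 * ρ ^ n)) :=
        mul_le_mul_of_nonneg_left h3 hq.le
      simp only [pow_succ] at hB ⊢
      nlinarith [hA, hB, h4]
  intro n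
  have hρn0 : (0:ℝ) ≤ ρ ^ n := pow_nonneg hρ0 n
  have hρn1 : ρ ^ n ≤ 1 := pow_le_one₀ hρ0 hρ1.le
  have han := ha n
  have h6 : a n * (1 - ε) ≤ a n * (1 - ε * (1 - ρ ^ n)) := by nlinarith [mul_nonneg (mul_nonneg han hε0) hρn0]
  have h7 : a n * (1 - ε) ≤ a 0 * ρ ^ n := h6.trans (key n)
  have h8 : a n ≤ a 0 * ρ ^ n / (1 - ε) := by
    rw [le_div_iff₀ (by linarith)]; exact h7
  refine h8.trans_eq ?_
  ring
end

section
/- Under the setup of the previous lemma (M symmetric PSD of rank r with smallest positive eigenvalue λ_r, G symmetric with ‖G‖_F = δ and P_⊥ G P_⊥ = 0), if δ is small enough (e.g., δ ≤ λ_r/2), then vᵀ(M+G)v ≥ −2δ²/λ_r for all unit vectors v; consequently M + G + (2δ²/λ_r) I is positive semidefinite. -/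
/-!
Write `v = p + y` with `p = U Uᵀ v` and `y = (1 - U Uᵀ) v`, so `‖v‖² = ‖p‖² + ‖y‖²`. Since
`(1 - U Uᵀ) G (1 - U Uᵀ) = 0` the term `yᵀ G y` vanishes, and Cauchy–Schwarz with `‖G‖_F = δ` gives
`vᵀ (M + G) v ≥ (λ_r - δ) ‖p‖² - 2 δ ‖p‖ ‖y‖`. Minimising this quadratic in `‖p‖` leaves
`-δ² ‖y‖² / (λ_r - δ)`, which is at least `-(2 δ² / λ_r) ‖v‖²` as soon as `δ ≤ λ_r / 2`.
-/

open Matrix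

attribute [local instance] Matrix.frobeniusSeminormedAddCommGroup

section

variable {m k : Type*} [Fintype m] [Fintype k]

lemma sq_norm_toLp_eq_dotProduct (v : m → ℝ) : ‖WithLp.toLp 2 v‖ ^ 2 = v ⬝ᵥ v := by
  rw [EuclideanSpace.norm_sq_eq]
  simp [dotProduct, sq]

-- Submultiplicativity of the Frobenius norm on the `1 × 1` product `row w * A * col z`.
lemma abs_dotProduct_mulVec_le_frobenius (A : Matrix m k ℝ) (w : m → ℝ) (z : k → ℝ) :
    |w ⬝ᵥ (A *ᵥ z)| ≤ ‖WithLp.toLp 2 w‖ * ‖A‖ * ‖WithLp.toLp 2 z‖ := by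
  have h1x1 : ‖replicateRow Unit w * replicateCol Unit (A *ᵥ z)‖ = |w ⬝ᵥ (A *ᵥ z)| := by
    rw [replicateRow_mul_replicateCol, frobenius_norm_def, ← Real.sqrt_eq_rpow]
    simp only [Fintype.sum_unique, of_apply, Real.rpow_two, Real.norm_eq_abs, sq_abs,
      Real.sqrt_sq_eq_abs]
  rw [← h1x1, ← frobenius_norm_replicateRow (ι := Unit), ← frobenius_norm_replicateCol (ι := Unit),
    replicateCol_mulVec, mul_assoc]
  exact (frobenius_norm_mul _ _).trans (by gcongr; exact frobenius_norm_mul _ _)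

lemma dotProduct_mul_mul_transpose_mulVec (U : Matrix m k ℝ) (D : Matrix k k ℝ) (v : m → ℝ) :
    v ⬝ᵥ ((U * D * Uᵀ) *ᵥ v) = (Uᵀ *ᵥ v) ⬝ᵥ (D *ᵥ (Uᵀ *ᵥ v)) := by
  rw [← mulVec_mulVec, ← mulVec_mulVec, dotProduct_mulVec, ← mulVec_transpose]

lemma mul_dotProduct_self_le_dotProduct_diagonal_mulVec [DecidableEq k] {Λ : k → ℝ} {c : ℝ}
    (hΛ : ∀ i, c ≤ Λ i) (x : k → ℝ) : c * (x ⬝ᵥ x) ≤ x ⬝ᵥ (diagonal Λ *ᵥ x) := by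
  simp only [dotProduct, mulVec_diagonal, Finset.mul_sum]
  exact Finset.sum_le_sum fun i _ => by nlinarith [hΛ i, mul_self_nonneg (x i)]

lemma dotProduct_mulVec_add_add_of_transpose_eq {G : Matrix m m ℝ} (hG : Gᵀ = G) (p y : m → ℝ) :
    (p + y) ⬝ᵥ (G *ᵥ (p + y)) = p ⬝ᵥ (G *ᵥ p) + 2 * (p ⬝ᵥ (G *ᵥ y)) + y ⬝ᵥ (G *ᵥ y) := by
  have hsymm : y ⬝ᵥ (G *ᵥ p) = p ⬝ᵥ (G *ᵥ y) := by
    rw [dotProduct_mulVec, ← mulVec_transpose, hG, dotProduct_comm]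
  rw [mulVec_add, add_dotProduct, dotProduct_add, dotProduct_add, hsymm]
  ring

variable {U : Matrix m k ℝ}

lemma dotProduct_mulVec_mul_transpose_self [DecidableEq k] (hU : Uᵀ * U = 1) (v : m → ℝ) :
    ((U * Uᵀ) *ᵥ v) ⬝ᵥ ((U * Uᵀ) *ᵥ v) = (Uᵀ *ᵥ v) ⬝ᵥ (Uᵀ *ᵥ v) := by
  rw [← mulVec_mulVec, dotProduct_mulVec, ← mulVec_transpose, mulVec_mulVec, mulVec_mulVec,
    hU, Matrix.one_mul]

lemma dotProduct_mulVec_mul_transpose_one_sub [DecidableEq m] [DecidableEq k] (hU : Uᵀ * U = 1)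
    (v : m → ℝ) :
    ((U * Uᵀ) *ᵥ v) ⬝ᵥ ((1 - U * Uᵀ) *ᵥ v) = 0 := by
  have hproj : (U * Uᵀ)ᵀ * (1 - U * Uᵀ) = 0 := by
    rw [transpose_mul, transpose_transpose, mul_sub, mul_one, Matrix.mul_assoc U,
      ← Matrix.mul_assoc Uᵀ, hU, Matrix.one_mul, sub_self]
  rw [dotProduct_comm, dotProduct_mulVec, ← mulVec_transpose, mulVec_mulVec, hproj,
    zero_mulVec, zero_dotProduct]

lemma dotProduct_mulVec_eq_zero_of_compl [DecidableEq m] {G : Matrix m m ℝ}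
    (hGperp : (1 - U * Uᵀ) * G * (1 - U * Uᵀ) = 0) (v : m → ℝ) :
    ((1 - U * Uᵀ) *ᵥ v) ⬝ᵥ (G *ᵥ ((1 - U * Uᵀ) *ᵥ v)) = 0 := by
  have hsymm : (1 - U * Uᵀ)ᵀ = 1 - U * Uᵀ := by
    rw [transpose_sub, transpose_one, transpose_mul, transpose_transpose]
  rw [mulVec_mulVec, dotProduct_comm, dotProduct_mulVec, ← mulVec_transpose, mulVec_mulVec,
    hsymm, ← Matrix.mul_assoc, hGperp, zero_mulVec, zero_dotProduct]

end

lemma neg_sq_div_mul_sq_le_quadratic {c : ℝ} (hc : 0 < c) (δ a b : ℝ) :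
    -(δ ^ 2 / c) * b ^ 2 ≤ c * a ^ 2 - 2 * δ * a * b := by
  have h : c * a ^ 2 - 2 * δ * a * b + δ ^ 2 / c * b ^ 2 = (c * a - δ * b) ^ 2 / c := by
    field_simp
    ring
  linarith [div_nonneg (sq_nonneg (c * a - δ * b)) hc.le]

lemma neg_two_sq_div_mul_le_quadratic {lr δ : ℝ} (hlr : 0 < lr) (hδs : δ ≤ lr / 2)
    (a b : ℝ) : -(2 * δ ^ 2 / lr) * (a ^ 2 + b ^ 2) ≤ (lr - δ) * a ^ 2 - 2 * δ * a * b := by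
  have hcoef : δ ^ 2 / (lr - δ) ≤ 2 * δ ^ 2 / lr := by
    rw [div_le_div_iff₀ (by linarith) hlr]
    nlinarith [sq_nonneg δ]
  calc -(2 * δ ^ 2 / lr) * (a ^ 2 + b ^ 2)
      ≤ -(δ ^ 2 / (lr - δ)) * b ^ 2 := by
        rw [neg_mul, neg_mul, neg_le_neg_iff]
        calc δ ^ 2 / (lr - δ) * b ^ 2 ≤ 2 * δ ^ 2 / lr * b ^ 2 := by gcongr
          _ ≤ 2 * δ ^ 2 / lr * (a ^ 2 + b ^ 2) := by
            gcongr
            exact le_add_of_nonneg_left (sq_nonneg a)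
    _ ≤ (lr - δ) * a ^ 2 - 2 * δ * a * b := neg_sq_div_mul_sq_le_quadratic (by linarith) δ a b

theorem neg_two_sq_div_mul_dotProduct_self_le {m k : Type*} [Fintype m] [Fintype k]
    [DecidableEq m] [DecidableEq k] {U : Matrix m k ℝ} (hU : Uᵀ * U = 1) {Λ : k → ℝ} {lr : ℝ}
    (hlr : 0 < lr) (hΛ : ∀ i, lr ≤ Λ i) {G : Matrix m m ℝ} (hGt : Gᵀ = G) (hGs : ‖G‖ ≤ lr / 2)
    (hGperp : (1 - U * Uᵀ) * G * (1 - U * Uᵀ) = 0) (v : m → ℝ) :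
    -(2 * ‖G‖ ^ 2 / lr) * (v ⬝ᵥ v) ≤ v ⬝ᵥ ((U * diagonal Λ * Uᵀ + G) *ᵥ v) := by
  set δ := ‖G‖
  set p := (U * Uᵀ) *ᵥ v
  set y := (1 - U * Uᵀ) *ᵥ v
  have hv : v = p + y := by
    simp only [p, y, sub_mulVec, one_mulVec, add_sub_cancel]
  set a := ‖WithLp.toLp 2 p‖
  set b := ‖WithLp.toLp 2 y‖
  have hpy : p ⬝ᵥ y = 0 := dotProduct_mulVec_mul_transpose_one_sub hU v
  have hvv : v ⬝ᵥ v = a ^ 2 + b ^ 2 := by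
    rw [sq_norm_toLp_eq_dotProduct, sq_norm_toLp_eq_dotProduct, hv, add_dotProduct,
      dotProduct_add, dotProduct_add, hpy, dotProduct_comm y p, hpy]
    ring
  have hM : lr * a ^ 2 ≤ v ⬝ᵥ ((U * diagonal Λ * Uᵀ) *ᵥ v) := by
    rw [dotProduct_mul_mul_transpose_mulVec, sq_norm_toLp_eq_dotProduct,
      dotProduct_mulVec_mul_transpose_self hU]
    exact mul_dotProduct_self_le_dotProduct_diagonal_mulVec hΛ _
  have hyy : y ⬝ᵥ (G *ᵥ y) = 0 := dotProduct_mulVec_eq_zero_of_compl hGperp v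
  have hG : v ⬝ᵥ (G *ᵥ v) = p ⬝ᵥ (G *ᵥ p) + 2 * (p ⬝ᵥ (G *ᵥ y)) := by
    rw [hv, dotProduct_mulVec_add_add_of_transpose_eq hGt, hyy, add_zero]
  have hpGp : -(δ * a ^ 2) ≤ p ⬝ᵥ (G *ᵥ p) := by
    have := neg_le_of_abs_le (abs_dotProduct_mulVec_le_frobenius G p p)
    linarith
  have hpGy : -(δ * a * b) ≤ p ⬝ᵥ (G *ᵥ y) := by
    have := neg_le_of_abs_le (abs_dotProduct_mulVec_le_frobenius G p y)
    linarith
  rw [add_mulVec, dotProduct_add, hvv, hG]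
  have := neg_two_sq_div_mul_le_quadratic hlr hGs a b
  linarith

theorem stmt_17 {n r : ℕ} (U : Matrix (Fin n) (Fin r) ℝ) (hU : Uᵀ * U = 1)
    (Λ : Fin r → ℝ) (lr : ℝ) (hlr : 0 < lr) (hΛ : ∀ i, lr ≤ Λ i)
    (M : Matrix (Fin n) (Fin n) ℝ) (hM : M = U * Matrix.diagonal Λ * Uᵀ)
    (G : Matrix (Fin n) (Fin n) ℝ) (hGt : Gᵀ = G)
    (δ : ℝ) (hδ : ‖G‖ = δ) (hδs : δ ≤ lr / 2)
    (hGperp : (1 - U * Uᵀ) * G * (1 - U * Uᵀ) = 0) :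
    (∀ v : Fin n → ℝ, v ⬝ᵥ v = 1 → -(2 * δ ^ 2 / lr) ≤ v ⬝ᵥ ((M + G) *ᵥ v)) ∧
    (M + G + (2 * δ ^ 2 / lr) • (1 : Matrix (Fin n) (Fin n) ℝ)).PosSemidef := by
  subst hM hδ
  have hbound := neg_two_sq_div_mul_dotProduct_self_le hU hlr hΛ hGt hδs hGperp
  refine ⟨fun v hv => by simpa [hv] using hbound v, ?_⟩
  refine PosSemidef.of_dotProduct_mulVec_nonneg ?_ fun v => ?_
  · simp [IsSymm, transpose_mul, Matrix.mul_assoc, hGt]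
  · have := hbound v
    simp only [star_trivial, add_mulVec, smul_mulVec, one_mulVec, dotProduct_add,
      dotProduct_smul, smul_eq_mul] at this ⊢
    linarith
end
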